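/- Let f : X → ℝ be Hölder continuous admitting a unique maximizing measure μ_∞, and let V be a Hölder continuous calibrated subaction for f. Then for every nonempty open set A ⊆ X and every y_0 ∈ X: sup_{z∈A} R_−^∞(z) ≤ limsup_{k→∞} sup{ R_−^k(z) : z ∈ A, σ^k(z) = y_0 }. -/

import Mathlib

open MeasureTheory Filter Topology Set ENNReal

noncomputable section

namespace GXY

variable {M : Type*}

/-- The shift map on the sequence space `ℕ → M`. -/
def shift (x : ℕ → M) : ℕ → M := fun n => x (n + 1)

/-- Prepending a symbol `a` to a sequence `x`. -/
def cons (a : M) (x : ℕ → M) : ℕ → M := fun n => Nat.casesOn n a x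

/-- The metric `d(x,y) = ∑ θ^n d_M(x_n, y_n)` on `ℕ → M`. -/
def D [MetricSpace M] (θ : ℝ) (x y : ℕ → M) : ℝ := ∑' n, θ ^ n * dist (x n) (y n)

/-- Hölder continuity with respect to the metric `D θ`. -/
def IsHolder [MetricSpace M] (θ : ℝ) (f : (ℕ → M) → ℝ) : Prop :=
  ∃ C > (0 : ℝ), ∃ α ∈ Set.Ioc (0 : ℝ) 1, ∀ x y, |f x - f y| ≤ C * (D θ x y) ^ α

/-- Shift-invariant Borel probability measures on `ℕ → M`. -/
def IsInvProb [MetricSpace M] [MeasurableSpace M] (μ : Measure (ℕ → M)) : Prop :=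
  IsProbabilityMeasure μ ∧ μ.map shift = μ

/-- The maximal ergodic average `β(f)`. -/
def betaF [MetricSpace M] [MeasurableSpace M] (f : (ℕ → M) → ℝ) : ℝ :=
  sSup { r | ∃ μ : Measure (ℕ → M), IsInvProb μ ∧ r = ∫ x, f x ∂μ }

/-- A maximizing measure for `f`. -/
def IsMaximizing [MetricSpace M] [MeasurableSpace M] (f : (ℕ → M) → ℝ)
    (μ : Measure (ℕ → M)) : Prop :=
  IsInvProb μ ∧ ∫ x, f x ∂μ = betaF f

/-- A calibrated subaction `V` for `f`:
`V y = max_{σ x = y} (f x + V x - β f)` for every `y`. -/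
def IsCalibrated [MetricSpace M] [MeasurableSpace M] (f V : (ℕ → M) → ℝ) : Prop :=
  Continuous V ∧
    ∀ y, IsGreatest { t | ∃ x, shift x = y ∧ t = f x + V x - betaF f } (V y)

/-- The Ruelle transfer operator `(L_g w)(x) = ∫_M e^{g(ax)} w(ax) dm(a)`. -/
def Ruelle [MetricSpace M] [MeasurableSpace M] (m : Measure M) (g w : (ℕ → M) → ℝ) :
    (ℕ → M) → ℝ :=
  fun x => ∫ a, Real.exp (g (cons a x)) * w (cons a x) ∂m

/-- `R₊ = β(f) + V ∘ σ - V - f ≥ 0`. -/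
def Rplus [MetricSpace M] [MeasurableSpace M] (f V : (ℕ → M) → ℝ) (x : ℕ → M) : ℝ :=
  betaF f + V (shift x) - V x - f x

/-- `R₊^∞(z) = ∑_{j≥0} R₊(σ^j z) ∈ [0,∞]`. -/
def RplusInf [MetricSpace M] [MeasurableSpace M] (f V : (ℕ → M) → ℝ) (z : ℕ → M) : ℝ≥0∞ :=
  ∑' j : ℕ, ENNReal.ofReal (Rplus f V (shift^[j] z))

/-- `R₋ = f + V - V ∘ σ - β(f) ≤ 0`. -/
def Rminus [MetricSpace M] [MeasurableSpace M] (f V : (ℕ → M) → ℝ) (x : ℕ → M) : ℝ :=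
  f x + V x - V (shift x) - betaF f

/-- The Birkhoff sum `R₋^k = ∑_{j<k} R₋ ∘ σ^j`. -/
def RminusBirk [MetricSpace M] [MeasurableSpace M] (f V : (ℕ → M) → ℝ) (k : ℕ)
    (z : ℕ → M) : ℝ :=
  ∑ j ∈ Finset.range k, Rminus f V (shift^[j] z)

/-- Extended-real logarithm with the convention `log 0 = -∞`. -/
def elog (t : ℝ) : EReal := if t = 0 then ⊥ else ((Real.log t : ℝ) : EReal)

end GXY

/-!
Fix `z ∈ A` with `R₊^∞(z) < ∞`. Along the forward orbit of `z` we have `R₊ → 0`, and along a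
backward orbit of `y₀` built from calibrating preimages `R₋ = 0`; hence `R₊` vanishes on the
closed shift-invariant sets of cluster points of both orbits. By Krylov–Bogolyubov each of these
sets carries an invariant probability measure, which is then maximizing, so uniqueness of the
maximizing measure forces the two sets to meet at some `q`. Concatenating a long initial segment
of `z` ending near `q` with a point of the backward orbit near `q` gives `w ∈ A` with
`σ^k w = y₀` for arbitrarily large `k`, and bounded distortion of Hölder Birkhoff sums gives
`R₋^k(w) ≥ R₋^n(z) - ε ≥ -R₊^∞(z) - ε`.
-/

open BoundedContinuousFunction Finset

theorem MapClusterPt.apply_eq_of_tendsto {α X Y : Type*} [TopologicalSpace X]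
    [TopologicalSpace Y] [T2Space Y] {F : Filter α} {u : α → X} {q : X} {φ : X → Y} {c : Y}
    (hq : MapClusterPt q F u) (hφ : ContinuousAt φ q) (hu : Tendsto (φ ∘ u) F (𝓝 c)) :
    φ q = c :=
  eq_of_nhds_neBot ((hq.continuousAt_comp hφ).clusterPt.mono hu)

section ClusterPoints

variable {X : Type*} [TopologicalSpace X] {u : ℕ → X} {q : X} {T : X → X}

theorem mapClusterPt_atTop_succ_iff :
    MapClusterPt q atTop (fun n => u (n + 1)) ↔ MapClusterPt q atTop u := by
  rw [← Function.comp_def, mapClusterPt_comp, map_add_atTop_eq_nat]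

theorem MapClusterPt.apply_of_succ_eq (hq : MapClusterPt q atTop u) (hT : ContinuousAt T q)
    (hu : ∀ n, u (n + 1) = T (u n)) : MapClusterPt (T q) atTop u := by
  rw [← mapClusterPt_atTop_succ_iff]
  simpa only [Function.comp_def, hu] using hq.continuousAt_comp hT

theorem MapClusterPt.apply_of_apply_succ_eq (hq : MapClusterPt q atTop u) (hT : ContinuousAt T q)
    (hu : ∀ n, T (u (n + 1)) = u n) : MapClusterPt (T q) atTop u := by
  have := (mapClusterPt_atTop_succ_iff.mpr hq).continuousAt_comp hT
  simpa only [Function.comp_def, hu] using this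

theorem isClosed_setOf_mapClusterPt : IsClosed {q | MapClusterPt q atTop u} :=
  isClosed_setOfPred_clusterPt

end ClusterPoints

theorem eventually_mul_rpow_lt (C : ℝ) {α ε : ℝ} (hα : 0 < α) (hε : 0 < ε) :
    ∀ᶠ t in 𝓝 (0 : ℝ), C * t ^ α < ε := by
  have : Tendsto (fun t : ℝ => C * t ^ α) (𝓝 0) (𝓝 0) := by
    simpa [Real.zero_rpow hα.ne'] using
      ((Real.continuousAt_rpow_const 0 α (Or.inr hα.le)).tendsto.const_mul C)
  exact this.eventually (eventually_lt_nhds hε)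

section KrylovBogolyubov

variable {X : Type*} [TopologicalSpace X] [MeasurableSpace X]

def orbitAverage (T : X → X) (x : X) (n : ℕ) : Measure X :=
  ((n : ℝ≥0∞) + 1)⁻¹ • ∑ j ∈ range (n + 1), Measure.dirac (T^[j] x)

instance (T : X → X) (x : X) (n : ℕ) : IsProbabilityMeasure (orbitAverage T x n) := by
  constructor
  simp only [orbitAverage, Measure.smul_apply, Measure.coe_finsetSum, Finset.sum_apply,
    measure_univ, sum_const, card_range, nsmul_eq_mul, Nat.cast_add, Nat.cast_one, mul_one,
    smul_eq_mul]
  exact ENNReal.inv_mul_cancel (by simp) (by simp)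

theorem integral_orbitAverage [OpensMeasurableSpace X] (T : X → X) (x : X) (n : ℕ)
    (g : X →ᵇ ℝ) :
    ∫ y, g y ∂(orbitAverage T x n) = (n + 1 : ℝ)⁻¹ * ∑ j ∈ range (n + 1), g (T^[j] x) := by
  rw [orbitAverage, integral_smul_measure, integral_finsetSum_measure fun _ _ => g.integrable _]
  simp only [integral_dirac' _ _ g.continuous.stronglyMeasurable, smul_eq_mul, ENNReal.toReal_inv]
  congr 2

theorem abs_integral_comp_sub_integral_orbitAverage_le [OpensMeasurableSpace X] {T : X → X}
    (hT : Continuous T) (x : X) (n : ℕ) (g : X →ᵇ ℝ) :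
    |∫ y, g (T y) ∂(orbitAverage T x n) - ∫ y, g y ∂(orbitAverage T x n)| ≤
      2 * ‖g‖ / (n + 1) := by
  change |∫ y, g.compContinuous ⟨T, hT⟩ y ∂(orbitAverage T x n) - _| ≤ _
  rw [integral_orbitAverage, integral_orbitAverage, ← mul_sub]
  simp only [compContinuous_apply, ContinuousMap.coe_mk, ← Function.iterate_succ_apply' T]
  rw [← sum_sub_distrib, sum_range_sub (fun j => g (T^[j] x)), abs_mul, abs_inv,
    abs_of_pos (by positivity : (0 : ℝ) < n + 1), inv_mul_eq_div]
  gcongr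
  exact g.dist_le_two_norm _ _

variable [CompactSpace X] [TopologicalSpace.MetrizableSpace X] [BorelSpace X]

/-- Krylov–Bogolyubov: a weak-* cluster point of the orbit averages is invariant. -/
theorem exists_isProbabilityMeasure_map_eq_self [Nonempty X] {T : X → X} (hT : Continuous T) :
    ∃ μ : Measure X, IsProbabilityMeasure μ ∧ μ.map T = μ := by
  obtain ⟨x⟩ := ‹Nonempty X›
  let ν : ℕ → ProbabilityMeasure X := fun n => ⟨orbitAverage T x n, inferInstance⟩
  obtain ⟨μ, hμ⟩ := exists_clusterPt_of_compactSpace (map ν atTop)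
  refine ⟨μ, inferInstance, ext_of_forall_integral_eq_of_IsFiniteMeasure fun g => ?_⟩
  rw [integral_map hT.measurable.aemeasurable g.continuous.aestronglyMeasurable]
  have hcont : Continuous fun ρ : ProbabilityMeasure X => ∫ y, g (T y) ∂ρ - ∫ y, g y ∂ρ :=
    (ProbabilityMeasure.continuous_integral_boundedContinuousFunction
      (g.compContinuous ⟨T, hT⟩)).sub
      (ProbabilityMeasure.continuous_integral_boundedContinuousFunction g)
  have hlim : Tendsto (fun n => ∫ y, g (T y) ∂(ν n : Measure X) - ∫ y, g y ∂(ν n : Measure X))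
      atTop (𝓝 0) := by
    refine squeeze_zero_norm
      (fun n => abs_integral_comp_sub_integral_orbitAverage_le hT x n g) ?_
    have := (tendsto_const_div_atTop_nhds_zero_nat (2 * ‖g‖)).comp (tendsto_add_atTop_nat 1)
    simpa [Function.comp_def] using this
  have := MapClusterPt.apply_eq_of_tendsto hμ hcont.continuousAt hlim
  exact sub_eq_zero.mp this

theorem exists_isProbabilityMeasure_map_eq_self_of_mapsTo {T : X → X} (hT : Continuous T)
    {K : Set X} (hK : IsClosed K) (hne : K.Nonempty) (hKT : MapsTo T K K) :
    ∃ μ : Measure X, IsProbabilityMeasure μ ∧ μ.map T = μ ∧ μ Kᶜ = 0 := by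
  have : CompactSpace K := isCompact_iff_compactSpace.mp hK.isCompact
  have : Nonempty K := hne.to_subtype
  obtain ⟨ν, hν, hνT⟩ := exists_isProbabilityMeasure_map_eq_self (hT.restrict hKT)
  have hval : Measurable ((↑) : K → X) := measurable_subtype_coe
  refine ⟨ν.map (↑), Measure.isProbabilityMeasure_map hval.aemeasurable, ?_, ?_⟩
  · rw [Measure.map_map hT.measurable hval]
    conv_rhs => rw [← hνT, Measure.map_map hval (hT.restrict hKT).measurable]
    rfl
  · rw [Measure.map_apply hval hK.isOpen_compl.measurableSet]
    simp

end KrylovBogolyubov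

namespace GXY

variable {M : Type*}

theorem shift_iterate_apply (x : ℕ → M) (k i : ℕ) : shift^[k] x i = x (i + k) := by
  induction k generalizing x with
  | zero => rfl
  | succ k ih => rw [Function.iterate_succ_apply, ih]; rfl

theorem continuous_shift [TopologicalSpace M] : Continuous (shift : (ℕ → M) → ℕ → M) :=
  continuous_pi fun n => continuous_apply (n + 1)

def splice (n : ℕ) (z p : ℕ → M) : ℕ → M := fun i => if i < n then z i else p (i - n)

theorem splice_apply_of_lt {n i : ℕ} (z p : ℕ → M) (hi : i < n) : splice n z p i = z i :=
  if_pos hi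

theorem shift_iterate_splice (n : ℕ) (z p : ℕ → M) : shift^[n] (splice n z p) = p := by
  funext i
  simp [shift_iterate_apply, splice]

theorem _root_.IsOpen.exists_cylinder_subset [TopologicalSpace M] {A : Set (ℕ → M)}
    (hA : IsOpen A) {z : ℕ → M} (hz : z ∈ A) :
    ∃ N, ∀ w : ℕ → M, (∀ i < N, w i = z i) → w ∈ A := by
  obtain ⟨I, u, hIu, hsub⟩ := isOpen_pi_iff.mp hA z hz
  refine ⟨I.sup id + 1, fun w hw => hsub fun i hi => ?_⟩
  rw [hw i (Nat.lt_succ_of_le (le_sup (f := id) hi))]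
  exact (hIu i hi).2

section Metric

variable [MetricSpace M] {θ : ℝ}

theorem summable_D (hdiam : ∀ a b : M, dist a b ≤ 1) (hθ₀ : 0 ≤ θ) (hθ₁ : θ < 1) (x y : ℕ → M) :
    Summable fun n => θ ^ n * dist (x n) (y n) :=
  (summable_geometric_of_lt_one hθ₀ hθ₁).of_nonneg_of_le (fun n => by positivity)
    fun n => mul_le_of_le_one_right (by positivity) (hdiam _ _)

theorem continuous_D (hdiam : ∀ a b : M, dist a b ≤ 1) (hθ₀ : 0 ≤ θ) (hθ₁ : θ < 1) :
    Continuous fun p : (ℕ → M) × (ℕ → M) => D θ p.1 p.2 := by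
  refine continuous_tsum (fun n => by fun_prop) (summable_geometric_of_lt_one hθ₀ hθ₁)
    fun n p => ?_
  rw [Real.norm_of_nonneg (by positivity)]
  exact mul_le_of_le_one_right (by positivity) (hdiam _ _)

@[simp]
theorem D_self (x : ℕ → M) : D θ x x = 0 := by
  simp [D]

theorem D_nonneg (hθ₀ : 0 ≤ θ) (x y : ℕ → M) : 0 ≤ D θ x y :=
  tsum_nonneg fun n => by positivity

theorem D_eq_pow_mul_D_shift_iterate (hdiam : ∀ a b : M, dist a b ≤ 1) (hθ₀ : 0 ≤ θ)
    (hθ₁ : θ < 1) {x y : ℕ → M} {n : ℕ} (h : ∀ i < n, x i = y i) :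
    D θ x y = θ ^ n * D θ (shift^[n] x) (shift^[n] y) := by
  rw [D, ← (summable_D hdiam hθ₀ hθ₁ x y).sum_add_tsum_nat_add n,
    sum_eq_zero fun i hi => by rw [h i (mem_range.mp hi), dist_self, mul_zero], zero_add, D,
    ← tsum_mul_left]
  congr 1 with i
  rw [shift_iterate_apply, shift_iterate_apply, pow_add]
  ring

theorem exists_mem_nhds_forall_D_lt (hdiam : ∀ a b : M, dist a b ≤ 1) (hθ₀ : 0 ≤ θ)
    (hθ₁ : θ < 1) (q : ℕ → M) {δ : ℝ} (hδ : 0 < δ) :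
    ∃ U ∈ 𝓝 q, ∀ x ∈ U, ∀ y ∈ U, D θ x y < δ := by
  have : ∀ᶠ p in 𝓝 (q, q), D θ p.1 p.2 < δ :=
    (continuous_D hdiam hθ₀ hθ₁).continuousAt.eventually_lt continuousAt_const (by simpa)
  obtain ⟨U₁, hU₁, U₂, hU₂, hU⟩ := mem_nhds_prod_iff.mp this
  exact ⟨U₁ ∩ U₂, inter_mem hU₁ hU₂, fun x hx y hy => hU (mk_mem_prod hx.1 hy.2)⟩

section Holder

variable {g : (ℕ → M) → ℝ}

theorem IsHolder.continuous (hdiam : ∀ a b : M, dist a b ≤ 1) (hθ₀ : 0 ≤ θ) (hθ₁ : θ < 1)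
    (hg : IsHolder θ g) : Continuous g := by
  obtain ⟨C, -, α, hα, hC⟩ := hg
  refine continuous_iff_continuousAt.mpr fun x₀ => tendsto_iff_norm_sub_tendsto_zero.mpr ?_
  have hD : Tendsto (fun x => D θ x x₀) (𝓝 x₀) (𝓝 0) := by
    simpa [Function.comp_def] using ((continuous_D hdiam hθ₀ hθ₁).comp
      (continuous_id.prodMk (continuous_const (y := x₀)))).tendsto x₀
  have hbound : Tendsto (fun x => C * D θ x x₀ ^ α) (𝓝 x₀) (𝓝 0) := by
    simpa [Real.zero_rpow hα.1.ne'] using (hD.rpow_const (Or.inr hα.1.le)).const_mul C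
  exact squeeze_zero (fun _ => norm_nonneg _) (fun x => hC x x₀) hbound

variable {C α : ℝ} (hg : ∀ x y, |g x - g y| ≤ C * D θ x y ^ α)
include hg

/-- Along two orbits that agree up to time `n`, the distance at time `j ≤ n` is
`θ ^ (n - j)` times the distance at time `n`. -/
theorem abs_sub_shift_iterate_le (hdiam : ∀ a b : M, dist a b ≤ 1) (hθ₀ : 0 ≤ θ) (hθ₁ : θ < 1)
    {n j : ℕ} (hj : j ≤ n) {w z : ℕ → M} (h : ∀ i < n, w i = z i) :
    |g (shift^[j] w) - g (shift^[j] z)| ≤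
      C * (θ ^ α) ^ (n - j) * D θ (shift^[n] w) (shift^[n] z) ^ α := by
  have hagree : ∀ i < n - j, shift^[j] w i = shift^[j] z i := fun i hi => by
    rw [shift_iterate_apply, shift_iterate_apply, h (i + j) (by omega)]
  have hiter : ∀ x : ℕ → M, shift^[n - j] (shift^[j] x) = shift^[n] x := fun x => by
    rw [← Function.iterate_add_apply, Nat.sub_add_cancel hj]
  calc |g (shift^[j] w) - g (shift^[j] z)| ≤ C * D θ (shift^[j] w) (shift^[j] z) ^ α := hg _ _
    _ = C * (θ ^ α) ^ (n - j) * D θ (shift^[n] w) (shift^[n] z) ^ α := by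
      rw [D_eq_pow_mul_D_shift_iterate hdiam hθ₀ hθ₁ hagree, hiter, hiter,
        Real.mul_rpow (by positivity) (D_nonneg hθ₀ _ _), ← Real.rpow_natCast_mul hθ₀,
        mul_comm _ α, Real.rpow_mul_natCast hθ₀, mul_assoc]

theorem abs_birkhoffSum_sub_le (hdiam : ∀ a b : M, dist a b ≤ 1) (hθ₀ : 0 ≤ θ) (hθ₁ : θ < 1)
    (hC : 0 ≤ C) (hα : 0 < α) {n : ℕ} {w z : ℕ → M} (h : ∀ i < n, w i = z i) :
    |birkhoffSum shift g n w - birkhoffSum shift g n z| ≤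
      C / (1 - θ ^ α) * D θ (shift^[n] w) (shift^[n] z) ^ α := by
  set r := θ ^ α
  set t := D θ (shift^[n] w) (shift^[n] z) ^ α
  have hr₀ : 0 ≤ r := by positivity
  have hr₁ : r < 1 := Real.rpow_lt_one hθ₀ hθ₁ hα
  have ht : 0 ≤ t := Real.rpow_nonneg (D_nonneg hθ₀ _ _) α
  have hgeom : ∑ j ∈ range n, r ^ (n - j) ≤ 1 / (1 - r) :=
    calc ∑ j ∈ range n, r ^ (n - j) ≤ ∑ j ∈ range n, r ^ (n - 1 - j) :=
          sum_le_sum fun j _ => pow_le_pow_of_le_one hr₀ hr₁.le (by omega)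
      _ = ∑ j ∈ range n, r ^ j := sum_range_reflect (r ^ ·) n
      _ ≤ r ^ 0 / (1 - r) := by
          rw [range_eq_Ico]; exact geom_sum_Ico_le_of_lt_one hr₀ hr₁
      _ = 1 / (1 - r) := by rw [pow_zero]
  calc |birkhoffSum shift g n w - birkhoffSum shift g n z|
      = |∑ j ∈ range n, (g (shift^[j] w) - g (shift^[j] z))| := by
        rw [birkhoffSum, birkhoffSum, sum_sub_distrib]
    _ ≤ ∑ j ∈ range n, C * r ^ (n - j) * t :=
        (abs_sum_le_sum_abs _ _).trans <| sum_le_sum fun j hj =>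
          abs_sub_shift_iterate_le hg hdiam hθ₀ hθ₁ (mem_range.mp hj).le h
    _ = C * t * ∑ j ∈ range n, r ^ (n - j) := by
        rw [mul_sum]; exact sum_congr rfl fun j _ => by ring
    _ ≤ C * t * (1 / (1 - r)) := by gcongr
    _ = C / (1 - r) * t := by ring

end Holder

section Calibration

variable [MeasurableSpace M] {f V : (ℕ → M) → ℝ}

theorem Rplus_eq_neg_Rminus (x : ℕ → M) : Rplus f V x = -Rminus f V x := by
  rw [Rplus, Rminus]; ring

theorem IsCalibrated.Rplus_nonneg (hV : IsCalibrated f V) (x : ℕ → M) : 0 ≤ Rplus f V x := by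
  have := (hV.2 (shift x)).2 ⟨x, rfl, rfl⟩
  rw [Rplus]; linarith

theorem IsCalibrated.exists_shift_eq_Rminus_eq_zero (hV : IsCalibrated f V) (y : ℕ → M) :
    ∃ x, shift x = y ∧ Rminus f V x = 0 := by
  obtain ⟨x, rfl, hx⟩ := (hV.2 y).1
  exact ⟨x, rfl, by rw [Rminus, hx]; ring⟩

theorem continuous_Rplus (hf : Continuous f) (hV : Continuous V) : Continuous (Rplus f V) :=
  ((continuous_const.add (hV.comp continuous_shift)).sub hV).sub hf

theorem RminusBirk_eq_birkhoffSum (n : ℕ) (x : ℕ → M) :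
    RminusBirk f V n x = birkhoffSum shift (Rminus f V) n x :=
  rfl

theorem RminusBirk_eq (n : ℕ) (x : ℕ → M) :
    RminusBirk f V n x = birkhoffSum shift f n x + V x - V (shift^[n] x) - n * betaF f := by
  have hR : ∀ j, Rminus f V (shift^[j] x) =
      f (shift^[j] x) + (V (shift^[j] x) - V (shift^[j + 1] x)) - betaF f := fun j => by
    rw [Rminus, Function.iterate_succ_apply']; ring
  simp only [RminusBirk, birkhoffSum, hR, sum_sub_distrib, sum_add_distrib,
    sum_range_sub' (fun j => V (shift^[j] x)), sum_const, card_range, nsmul_eq_mul,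
    Function.iterate_zero_apply]
  ring

theorem RminusBirk_iterate_eq_zero {g : (ℕ → M) → ℕ → M} (hg : ∀ y, shift (g y) = y)
    (hgR : ∀ y, Rminus f V (g y) = 0) (m : ℕ) (y : ℕ → M) : RminusBirk f V m (g^[m] y) = 0 := by
  induction m generalizing y with
  | zero => simp [RminusBirk]
  | succ m ih =>
    rw [RminusBirk_eq_birkhoffSum, birkhoffSum_succ', Function.iterate_succ_apply', hgR, hg,
      ← RminusBirk_eq_birkhoffSum, ih, add_zero]

theorem IsCalibrated.neg_toReal_RplusInf_le_RminusBirk (hV : IsCalibrated f V) {z : ℕ → M}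
    (hfin : RplusInf f V z ≠ ⊤) (n : ℕ) : -(RplusInf f V z).toReal ≤ RminusBirk f V n z := by
  have hsum : ∑ j ∈ range n, Rplus f V (shift^[j] z) ≤ (RplusInf f V z).toReal := by
    rw [← ENNReal.toReal_ofReal (sum_nonneg fun j _ => hV.Rplus_nonneg _),
      ENNReal.ofReal_sum_of_nonneg fun j _ => hV.Rplus_nonneg _]
    exact ENNReal.toReal_mono hfin (ENNReal.sum_le_tsum _)
  simp only [RminusBirk, Rplus_eq_neg_Rminus, sum_neg_distrib] at hsum ⊢
  linarith

theorem IsCalibrated.tendsto_Rplus_shift_iterate (hV : IsCalibrated f V) {z : ℕ → M}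
    (hfin : RplusInf f V z ≠ ⊤) :
    Tendsto (fun n => Rplus f V (shift^[n] z)) atTop (𝓝 0) := by
  have := (ENNReal.tendsto_toReal ENNReal.zero_ne_top).comp
    (ENNReal.tendsto_atTop_zero_of_tsum_ne_top hfin)
  simpa [Function.comp_def, ENNReal.toReal_ofReal (hV.Rplus_nonneg _)] using this

theorem exists_pos_forall_RminusBirk_le (hdiam : ∀ a b : M, dist a b ≤ 1) (hθ₀ : 0 ≤ θ)
    (hθ₁ : θ < 1) (hf : IsHolder θ f) (hV : IsHolder θ V) {ε : ℝ} (hε : 0 < ε) :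
    ∃ δ > 0, ∀ (n : ℕ) (z w : ℕ → M), (∀ i < n, w i = z i) →
      D θ (shift^[n] w) (shift^[n] z) < δ → RminusBirk f V n z ≤ RminusBirk f V n w + ε := by
  obtain ⟨Cf, hCf, αf, hαf, hf⟩ := hf
  obtain ⟨CV, hCV, αV, hαV, hV⟩ := hV
  obtain ⟨δ, hδ, hδε⟩ := Metric.eventually_nhds_iff.mp
    ((eventually_mul_rpow_lt (Cf / (1 - θ ^ αf)) hαf.1 (half_pos hε)).and
      (eventually_mul_rpow_lt (2 * CV) hαV.1 (half_pos hε)))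
  refine ⟨δ, hδ, fun n z w h hwz => ?_⟩
  set t := D θ (shift^[n] w) (shift^[n] z)
  have ht : 0 ≤ t := D_nonneg hθ₀ _ _
  obtain ⟨hsmall_f, hsmall_V⟩ := hδε (by rwa [Real.dist_eq, sub_zero, abs_of_nonneg ht])
  have hsum := abs_birkhoffSum_sub_le hf hdiam hθ₀ hθ₁ hCf.le hαf.1 h
  have hstart : |V w - V z| ≤ CV * t ^ αV := by
    have := abs_sub_shift_iterate_le hV hdiam hθ₀ hθ₁ (Nat.zero_le n) h
    simp only [Function.iterate_zero_apply, Nat.sub_zero] at this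
    refine this.trans (mul_le_mul_of_nonneg_right ?_ (by positivity))
    exact mul_le_of_le_one_right hCV.le
      (pow_le_one₀ (by positivity) (Real.rpow_le_one hθ₀ hθ₁.le hαV.1.le))
  have hend : |V (shift^[n] w) - V (shift^[n] z)| ≤ CV * t ^ αV := hV _ _
  rw [RminusBirk_eq, RminusBirk_eq]
  linarith [abs_le.mp hsum, abs_le.mp hstart, abs_le.mp hend]

section Compact

variable [CompactSpace M] [BorelSpace M]

theorem integral_eq_betaF_of_Rplus_eq_zero (hf : Continuous f) (hV : Continuous V)
    {μ : Measure (ℕ → M)} [IsProbabilityMeasure μ] (hμ : μ.map shift = μ) {K : Set (ℕ → M)}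
    (hK : ∀ x ∈ K, Rplus f V x = 0) (hμK : μ Kᶜ = 0) : ∫ x, f x ∂μ = betaF f := by
  have hint : ∀ {g : (ℕ → M) → ℝ}, Continuous g → Integrable g μ := fun hg =>
    hg.integrable_of_hasCompactSupport (HasCompactSupport.of_compactSpace _)
  have hVσ : Continuous fun x => V (shift x) := hV.comp continuous_shift
  have hVshift : ∫ x, V (shift x) ∂μ = ∫ x, V x ∂μ := by
    rw [← integral_map continuous_shift.aemeasurable hV.aestronglyMeasurable, hμ]
  have hzero : ∫ x, Rplus f V x ∂μ = 0 :=
    integral_eq_zero_of_ae (measure_mono_null (fun x hx hxK => hx (hK x hxK)) hμK)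
  simp only [Rplus] at hzero
  have h₁ : Integrable (fun x => betaF f + V (shift x) - V x) μ :=
    hint ((continuous_const.add hVσ).sub hV)
  have h₂ : Integrable (fun x => betaF f + V (shift x)) μ := hint (continuous_const.add hVσ)
  rw [integral_sub h₁ (hint hf), integral_sub h₂ (hint hV),
    integral_add (integrable_const _) (hint hVσ), hVshift] at hzero
  simp only [integral_const, probReal_univ, smul_eq_mul, one_mul] at hzero
  linarith

theorem exists_isMaximizing_of_mapsTo (hf : Continuous f) (hV : Continuous V)
    {K : Set (ℕ → M)} (hK : IsClosed K) (hne : K.Nonempty) (hKσ : MapsTo shift K K)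
    (hK0 : ∀ x ∈ K, Rplus f V x = 0) : ∃ μ, IsMaximizing f μ ∧ μ Kᶜ = 0 := by
  obtain ⟨μ, hμ, hμσ, hμK⟩ :=
    exists_isProbabilityMeasure_map_eq_self_of_mapsTo continuous_shift hK hne hKσ
  exact ⟨μ, ⟨⟨hμ, hμσ⟩, integral_eq_betaF_of_Rplus_eq_zero hf hV hμσ hK0 hμK⟩, hμK⟩

theorem inter_nonempty_of_existsUnique_isMaximizing
    (huniq : ∃! μ : Measure (ℕ → M), IsMaximizing f μ) (hf : Continuous f) (hV : Continuous V)
    {K L : Set (ℕ → M)} (hK : IsClosed K) (hKne : K.Nonempty) (hKσ : MapsTo shift K K)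
    (hK0 : ∀ x ∈ K, Rplus f V x = 0) (hL : IsClosed L) (hLne : L.Nonempty)
    (hLσ : MapsTo shift L L) (hL0 : ∀ x ∈ L, Rplus f V x = 0) : (K ∩ L).Nonempty := by
  obtain ⟨μ, hμ, hμK⟩ := exists_isMaximizing_of_mapsTo hf hV hK hKne hKσ hK0
  obtain ⟨ν, hν, hνL⟩ := exists_isMaximizing_of_mapsTo hf hV hL hLne hLσ hL0
  rw [huniq.unique hν hμ] at hνL
  have : IsProbabilityMeasure μ := hμ.1.1
  by_contra hempty
  have := measure_union_null hμK hνL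
  rw [← compl_inter, not_nonempty_iff_eq_empty.mp hempty, compl_empty, measure_univ] at this
  exact one_ne_zero this

theorem exists_mapClusterPt_shift_iterate_and_iterate
    (huniq : ∃! μ : Measure (ℕ → M), IsMaximizing f μ) (hf : Continuous f)
    (hV : IsCalibrated f V) {z : ℕ → M} (hfin : RplusInf f V z ≠ ⊤)
    {g : (ℕ → M) → ℕ → M} (hg : ∀ y, shift (g y) = y) (hgR : ∀ y, Rminus f V (g y) = 0)
    (y₀ : ℕ → M) :
    ∃ q, MapClusterPt q atTop (fun n => shift^[n] z) ∧ MapClusterPt q atTop (fun m => g^[m] y₀) := by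
  have hR := continuous_Rplus hf hV.1
  refine inter_nonempty_of_existsUnique_isMaximizing huniq hf hV.1
    isClosed_setOf_mapClusterPt (exists_clusterPt_of_compactSpace _)
    (fun q hq => MapClusterPt.apply_of_succ_eq hq continuous_shift.continuousAt
      fun n => Function.iterate_succ_apply' _ _ _)
    (fun q hq => MapClusterPt.apply_eq_of_tendsto hq hR.continuousAt
      (hV.tendsto_Rplus_shift_iterate hfin))
    isClosed_setOf_mapClusterPt (exists_clusterPt_of_compactSpace _)
    (fun q hq => MapClusterPt.apply_of_apply_succ_eq hq continuous_shift.continuousAt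
      fun m => by rw [Function.iterate_succ_apply', hg])
    (fun q hq => (mapClusterPt_atTop_succ_iff.mpr hq).apply_eq_of_tendsto hR.continuousAt ?_)
  simp [Function.comp_def, Function.iterate_succ_apply', Rplus_eq_neg_Rminus, hgR]

theorem frequently_exists_mem_shift_iterate_eq_le_RminusBirk
    (hdiam : ∀ a b : M, dist a b ≤ 1) (hθ₀ : 0 ≤ θ) (hθ₁ : θ < 1) (hf : IsHolder θ f)
    (hV : IsCalibrated f V) (hVH : IsHolder θ V)
    (huniq : ∃! μ : Measure (ℕ → M), IsMaximizing f μ) {A : Set (ℕ → M)} (hA : IsOpen A)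
    {z : ℕ → M} (hz : z ∈ A) (hfin : RplusInf f V z ≠ ⊤) (y₀ : ℕ → M) {c : ℝ}
    (hc : c < -(RplusInf f V z).toReal) :
    ∃ᶠ k in atTop, ∃ w ∈ A, shift^[k] w = y₀ ∧ c ≤ RminusBirk f V k w := by
  choose g hg hgR using hV.exists_shift_eq_Rminus_eq_zero
  obtain ⟨q, hqz, hqy⟩ := exists_mapClusterPt_shift_iterate_and_iterate huniq
    (hf.continuous hdiam hθ₀ hθ₁) hV hfin hg hgR y₀
  obtain ⟨δ, hδ, hdistortion⟩ :=
    exists_pos_forall_RminusBirk_le hdiam hθ₀ hθ₁ hf hVH (sub_pos.mpr hc)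
  obtain ⟨U, hU, hUδ⟩ := exists_mem_nhds_forall_D_lt hdiam hθ₀ hθ₁ q hδ
  obtain ⟨N, hN⟩ := hA.exists_cylinder_subset hz
  obtain ⟨n, hnU, hnN⟩ := ((hqz.frequently hU).and_eventually (eventually_ge_atTop N)).exists
  refine frequently_atTop.mpr fun k₀ => ?_
  obtain ⟨m, hmU, hmk⟩ := ((hqy.frequently hU).and_eventually (eventually_ge_atTop k₀)).exists
  set w := splice n z (g^[m] y₀)
  have hwz : ∀ i < n, w i = z i := fun i hi => splice_apply_of_lt _ _ hi
  have hwn : shift^[n] w = g^[m] y₀ := shift_iterate_splice n z _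
  refine ⟨n + m, by omega, w, hN w fun i hi => hwz i (by omega), ?_, ?_⟩
  · rw [add_comm, Function.iterate_add_apply, hwn, (Function.LeftInverse.iterate hg m) y₀]
  · have hclose := hdistortion n z w hwz (hwn ▸ hUδ _ hmU _ hnU)
    have hz_ge := hV.neg_toReal_RplusInf_le_RminusBirk hfin n
    rw [RminusBirk_eq_birkhoffSum, birkhoffSum_add, hwn, ← RminusBirk_eq_birkhoffSum,
      ← RminusBirk_eq_birkhoffSum, RminusBirk_iterate_eq_zero hg hgR, add_zero]
    linarith

end Compact

end Calibration

end Metric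

theorem sup_RminusInf_le_limsup_sup_over_preimages_general
    [MetricSpace M] [CompactSpace M] [MeasurableSpace M] [BorelSpace M]
    (hdiam : ∀ a b : M, dist a b ≤ 1)
    (θ : ℝ) (hθ : θ ∈ Set.Ioo (0 : ℝ) 1)
    (f V : (ℕ → M) → ℝ) (hf : IsHolder θ f)
    (huniq : ∃! μ : Measure (ℕ → M), IsMaximizing f μ)
    (hV : IsCalibrated f V) (hVH : IsHolder θ V) :
    ∀ A : Set (ℕ → M), IsOpen A → A.Nonempty → ∀ y₀ : ℕ → M,
      (⨆ z ∈ A, -(RplusInf f V z : EReal)) ≤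
        Filter.limsup (fun k : ℕ =>
          ⨆ z ∈ {z | z ∈ A ∧ shift^[k] z = y₀}, ((RminusBirk f V k z : ℝ) : EReal)) atTop := by
  intro A hA _ y₀
  refine iSup₂_le fun z hz => ?_
  rcases eq_or_ne (RplusInf f V z) ⊤ with htop | hfin
  · simp [htop]
  rw [← ENNReal.ofReal_toReal hfin, EReal.coe_ennreal_ofReal, max_eq_left ENNReal.toReal_nonneg,
    ← EReal.coe_neg]
  refine EReal.ge_of_forall_gt_iff_ge.mp fun c hc => le_limsup_of_frequently_le' ?_
  refine (frequently_exists_mem_shift_iterate_eq_le_RminusBirk hdiam hθ.1.le hθ.2 hf hV hVH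
    huniq hA hz hfin y₀ (EReal.coe_lt_coe_iff.mp hc)).mono ?_
  rintro k ⟨w, hwA, hwk, hw⟩
  exact le_iSup₂_of_le (f := fun w (_ : w ∈ {w | w ∈ A ∧ shift^[k] w = y₀}) =>
    ((RminusBirk f V k w : ℝ) : EReal)) w ⟨hwA, hwk⟩ (EReal.coe_le_coe_iff.mpr hw)

theorem sup_RminusInf_le_limsup_sup_over_preimages
    [MetricSpace M] [CompactSpace M] [ConnectedSpace M] [MeasurableSpace M] [BorelSpace M]
    (hdiam : ∀ a b : M, dist a b ≤ 1)
    (θ : ℝ) (hθ : θ ∈ Set.Ioo (0 : ℝ) 1)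
    (f V : (ℕ → M) → ℝ) (hf : IsHolder θ f)
    (huniq : ∃! μ : Measure (ℕ → M), IsMaximizing f μ)
    (hV : IsCalibrated f V) (hVH : IsHolder θ V) :
    ∀ A : Set (ℕ → M), IsOpen A → A.Nonempty → ∀ y₀ : ℕ → M,
      (⨆ z ∈ A, -(RplusInf f V z : EReal)) ≤
        Filter.limsup (fun k : ℕ =>
          ⨆ z ∈ {z | z ∈ A ∧ shift^[k] z = y₀}, ((RminusBirk f V k z : ℝ) : EReal)) atTop :=
  sup_RminusInf_le_limsup_sup_over_preimages_general hdiam θ hθ f V hf huniq hV hVH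

end GXY
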